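/- Let H be a d×d complex Hermitian matrix with spectral decomposition H = Σ_{i=1}^M λ_i Π_i (eigenvalues ordered increasingly, nonzero pairwise-orthogonal Hermitian projections summing to the identity), and let β ≥ 0. Then the normalized trace distance between the thermal state e^{−βH}/Tr[e^{−βH}] and the normalized ground-space projector Π_1/Tr[Π_1] is at most 1/(1 + e^{βΔ} d_G/(d − d_G)), where Δ := λ_2 − λ_1, d_G := Tr[Π_1], and d_G < d. -/

import Mathlib

open Matrix
open scoped ComplexOrder

/-- Positive semidefinite square root (junk value `0` off the PSD matrices). -/
noncomputable def msqrt {d : ℕ} (A : Matrix (Fin d) (Fin d) ℂ) : Matrix (Fin d) (Fin d) ℂ :=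
  open scoped Classical in
  if h : A.PosSemidef then
    (h.1.eigenvectorUnitary : Matrix (Fin d) (Fin d) ℂ) *
      diagonal ((↑) ∘ (Real.sqrt ·) ∘ h.1.eigenvalues) *
      (star h.1.eigenvectorUnitary : Matrix (Fin d) (Fin d) ℂ)
  else 0

/-- Trace norm `‖A‖₁ = Tr[√(Aᴴ A)]`. -/
noncomputable def traceNorm {d : ℕ} (A : Matrix (Fin d) (Fin d) ℂ) : ℝ :=
  (msqrt (Aᴴ * A)).trace.re

variable {d M : ℕ}

/-- The algebra homomorphism from `ℂ^M` to matrices given by a complete family of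
orthogonal idempotents. -/
noncomputable def projAlgHom (P : Fin M → Matrix (Fin d) (Fin d) ℂ)
    (hPorth : ∀ i j, P i * P j = if i = j then P i else 0)
    (hPsum : ∑ i, P i = 1) : (Fin M → ℂ) →ₐ[ℂ] Matrix (Fin d) (Fin d) ℂ where
  toFun v := ∑ i, v i • P i
  map_one' := by simp [hPsum]
  map_mul' v w := by
    show ∑ i, (v i * w i) • P i = (∑ i, v i • P i) * (∑ i, w i • P i)
    rw [Finset.sum_mul_sum]
    symm
    refine Finset.sum_congr rfl fun i _ => ?_
    have h : ∀ j, (v i • P i) * (w j • P j) = (v i * w j) • (P i * P j) := fun j => by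
      rw [Matrix.smul_mul, Matrix.mul_smul, smul_smul]
    simp_rw [h, hPorth]
    simp only [smul_ite, smul_zero]
    simp
  map_zero' := by simp
  map_add' v w := by
    show ∑ i, (v i + w i) • P i = _
    simp [add_smul, Finset.sum_add_distrib]
  commutes' z := by
    show ∑ i, z • P i = _
    simp [← Finset.smul_sum, hPsum, Algebra.algebraMap_eq_smul_one]

theorem exp_projSum (P : Fin M → Matrix (Fin d) (Fin d) ℂ)
    (hPorth : ∀ i j, P i * P j = if i = j then P i else 0)
    (hPsum : ∑ i, P i = 1) (c : Fin M → ℂ) :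
    NormedSpace.exp (∑ i, c i • P i) = ∑ i, Complex.exp (c i) • P i := by
  letI : SeminormedRing (Matrix (Fin d) (Fin d) ℂ) := Matrix.linftyOpSemiNormedRing
  letI : NormedRing (Matrix (Fin d) (Fin d) ℂ) := Matrix.linftyOpNormedRing
  letI : NormedAlgebra ℂ (Matrix (Fin d) (Fin d) ℂ) := Matrix.linftyOpNormedAlgebra
  have hcont : Continuous (projAlgHom P hPorth hPsum) :=
    LinearMap.continuous_of_finiteDimensional (projAlgHom P hPorth hPsum).toLinearMap
  have h1 : (∑ i, c i • P i) = projAlgHom P hPorth hPsum c := rfl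
  rw [h1]
  erw [← NormedSpace.map_exp (projAlgHom P hPorth hPsum) hcont c]
  show ∑ i, (NormedSpace.exp c) i • P i = _
  refine Finset.sum_congr rfl fun i _ => ?_
  rw [Pi.coe_exp, ← Complex.exp_eq_exp_ℂ]
variable {d M : ℕ}

theorem psd_real_smul {A : Matrix (Fin d) (Fin d) ℂ} (hA : A.PosSemidef) {a : ℝ} (ha : 0 ≤ a) :
    ((a : ℂ) • A).PosSemidef := by
  constructor
  · unfold Matrix.IsHermitian
    rw [conjTranspose_smul, hA.1.eq]
    congr 1
    simp [Complex.star_def, Complex.conj_ofReal]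
  · intro x
    have ha' : (0:ℂ) ≤ (a:ℂ) := by exact_mod_cast Complex.zero_le_real.mpr ha
    exact (hA.smul ha').2 x

theorem psd_sum_real_smul (P : Fin M → Matrix (Fin d) (Fin d) ℂ)
    (hP : ∀ i, (P i).PosSemidef) (a : Fin M → ℝ) (ha : ∀ i, 0 ≤ a i) :
    (∑ i, ((a i : ℂ)) • P i).PosSemidef := by
  classical
  refine Finset.sum_induction _ _ (fun A B hA hB => hA.add hB) ?_ ?_
  · exact Matrix.PosSemidef.zero
  · exact fun i _ => psd_real_smul (hP i) (ha i)

theorem proj_psd (P : Matrix (Fin d) (Fin d) ℂ) (hherm : P.IsHermitian)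
    (hidem : P * P = P) : P.PosSemidef := by
  have := Matrix.posSemidef_conjTranspose_mul_self P
  rwa [hherm.eq, hidem] at this

theorem psd_trace_re_nonneg {A : Matrix (Fin d) (Fin d) ℂ} (hA : A.PosSemidef) :
    0 ≤ A.trace.re := by
  have h : ∀ i, 0 ≤ (A i i).re := by
    intro i
    have := hA.diag_nonneg (i := i)
    exact (Complex.le_def.mp this).1
  rw [Matrix.trace, Complex.re_sum]
  exact Finset.sum_nonneg fun i _ => h i

theorem herm_trace_re {A : Matrix (Fin d) (Fin d) ℂ} (hA : A.IsHermitian) :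
    A.trace = (A.trace.re : ℂ) := by
  have h := Matrix.trace_conjTranspose A
  rw [hA.eq] at h
  have : (starRingEnd ℂ) A.trace = A.trace := h.symm
  exact (Complex.conj_eq_iff_re.mp this).symm

open scoped MatrixOrder in
theorem traceNorm_projSum (P : Fin M → Matrix (Fin d) (Fin d) ℂ)
    (hPherm : ∀ i, (P i).IsHermitian)
    (hPorth : ∀ i j, P i * P j = if i = j then P i else 0)
    (r : Fin M → ℝ) :
    traceNorm (∑ i, ((r i : ℂ)) • P i) = ∑ i, |r i| * ((P i).trace.re) := by
  classical
  have hPpsd : ∀ i, (P i).PosSemidef := fun i =>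
    proj_psd (P i) (hPherm i) (by simpa using hPorth i i)
  have hmul : ∀ (a b : Fin M → ℝ),
      (∑ i, ((a i : ℂ)) • P i) * (∑ i, ((b i : ℂ)) • P i)
        = ∑ i, ((a i * b i : ℝ) : ℂ) • P i := by
    intro a b
    rw [Finset.sum_mul_sum]
    refine Finset.sum_congr rfl fun i _ => ?_
    have h : ∀ j, ((a i : ℂ) • P i) * ((b j : ℂ) • P j)
        = ((a i : ℂ) * (b j : ℂ)) • (P i * P j) := fun j => by
      rw [Matrix.smul_mul, Matrix.mul_smul, smul_smul]
    simp_rw [h, hPorth]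
    simp only [smul_ite, smul_zero]
    rw [Finset.sum_ite_eq]
    simp
  set A := ∑ i, ((r i : ℂ)) • P i with hAdef
  have hAh : Aᴴ = A := by
    rw [hAdef, conjTranspose_sum]
    refine Finset.sum_congr rfl fun i _ => ?_
    rw [conjTranspose_smul, (hPherm i).eq]
    congr 1
    simp [Complex.star_def, Complex.conj_ofReal]
  set B := ∑ i, ((|r i| : ℝ) : ℂ) • P i with hBdef
  have hBpsd : B.PosSemidef := psd_sum_real_smul P hPpsd _ fun i => abs_nonneg _
  have hAA : (Aᴴ * A).PosSemidef := Matrix.posSemidef_conjTranspose_mul_self A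
  have hB2 : B ^ 2 = Aᴴ * A := by
    rw [pow_two, hAh, hBdef, hAdef, hmul, hmul]
    refine Finset.sum_congr rfl fun i _ => ?_
    rw [abs_mul_abs_self]
  have hsqrt : msqrt (Aᴴ * A) = B := by
    rw [msqrt, dif_pos hAA]
    have hc := hAA.1.cfc_eq Real.sqrt
    rw [IsHermitian.cfc, Unitary.conjStarAlgAut_apply] at hc
    have hm : cfc Real.sqrt (Aᴴ * A) = B := by
      rw [← cfcₙ_eq_cfc, ← CFC.sqrt_eq_real_sqrt _ hAA.nonneg]
      exact CFC.sqrt_unique (by rw [← pow_two, hB2]) hBpsd.nonneg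
    rw [← hm]
    exact hc.symm
  rw [traceNorm, hsqrt, hBdef, Matrix.trace_sum, Complex.re_sum]
  refine Finset.sum_congr rfl fun i _ => ?_
  rw [Matrix.trace_smul]
  simp [Complex.re_ofReal_mul, smul_eq_mul]

/-- upper bound on the normalized trace distance between the thermal state
and the normalized ground-space projector, in terms of the spectral gap. -/
theorem trace_dist_thermal_ground_le
    {d M : ℕ} (hd : 1 ≤ d) (hM : 2 ≤ M)
    (lam : Fin M → ℝ) (hlam : Monotone lam)
    (P : Fin M → Matrix (Fin d) (Fin d) ℂ)
    (hPne : ∀ i, P i ≠ 0)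
    (hPherm : ∀ i, (P i).IsHermitian)
    (hPorth : ∀ i j, P i * P j = if i = j then P i else 0)
    (hPsum : ∑ i, P i = 1)
    (H : Matrix (Fin d) (Fin d) ℂ)
    (hH : H = ∑ i, (lam i : ℂ) • P i)
    (i0 : Fin M) (hi0 : i0 = ⟨0, by omega⟩)
    (i1 : Fin M) (hi1 : i1 = ⟨1, by omega⟩)
    (dG : ℕ) (hdGpos : 0 < dG) (hdG : (P i0).trace = (dG : ℂ))
    (hdGd : dG < d)
    (β : ℝ) (hβ : 0 ≤ β) :
    traceNorm (((NormedSpace.exp ((-(β : ℂ)) • H)).trace)⁻¹ •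
          NormedSpace.exp ((-(β : ℂ)) • H) -
        ((P i0).trace)⁻¹ • P i0) / 2 ≤
      1 / (1 + Real.exp (β * (lam i1 - lam i0)) * ((dG : ℝ) / ((d : ℝ) - (dG : ℝ)))) := by
  classical
  have hPpsd : ∀ i, (P i).PosSemidef := fun i =>
    proj_psd (P i) (hPherm i) (by simpa using hPorth i i)
  set t : Fin M → ℝ := fun i => (P i).trace.re with ht
  have htrace : ∀ i, (P i).trace = (t i : ℂ) := fun i => herm_trace_re (hPherm i)
  have htnn : ∀ i, 0 ≤ t i := fun i => psd_trace_re_nonneg (hPpsd i)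
  have hti0 : t i0 = (dG : ℝ) := by
    have h1 := (htrace i0).symm.trans hdG
    exact_mod_cast h1
  have htsum : ∑ i, t i = (d : ℝ) := by
    have h1 : ∑ i, (P i).trace = (d : ℂ) := by
      rw [← Matrix.trace_sum, hPsum, Matrix.trace_one]
      simp
    have h2 : ((∑ i, t i : ℝ) : ℂ) = ((d : ℝ) : ℂ) := by
      push_cast
      rw [← h1]
      exact (Finset.sum_congr rfl fun i _ => (htrace i).symm)
    exact_mod_cast h2
  set p : Fin M → ℝ := fun i => Real.exp (-β * lam i) with hp
  have hppos : ∀ i, 0 < p i := fun i => Real.exp_pos _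
  set Z : ℝ := ∑ i, p i * t i with hZ
  have hterm_nn : ∀ i, 0 ≤ p i * t i := fun i => mul_nonneg (hppos i).le (htnn i)
  have hZ0 : p i0 * (dG : ℝ) ≤ Z := by
    have h := Finset.single_le_sum (f := fun i => p i * t i)
      (fun i _ => hterm_nn i) (Finset.mem_univ i0)
    have h' : p i0 * t i0 ≤ Z := by simpa using h
    rwa [hti0] at h'
  have hZpos : 0 < Z := lt_of_lt_of_le (by positivity) hZ0
  -- exponential
  have hHs : (-(β : ℂ)) • H = ∑ i, ((-β * lam i : ℝ) : ℂ) • P i := by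
    rw [hH, Finset.smul_sum]
    refine Finset.sum_congr rfl fun i _ => ?_
    rw [smul_smul]
    push_cast
    ring_nf
  have hexp : NormedSpace.exp ((-(β : ℂ)) • H) = ∑ i, ((p i : ℝ) : ℂ) • P i := by
    rw [hHs, exp_projSum P hPorth hPsum]
    refine Finset.sum_congr rfl fun i _ => ?_
    rw [← Complex.ofReal_exp]
  have hexptrace : (NormedSpace.exp ((-(β : ℂ)) • H)).trace = (Z : ℂ) := by
    rw [hexp, Matrix.trace_sum, hZ]
    push_cast
    refine Finset.sum_congr rfl fun i _ => ?_
    rw [Matrix.trace_smul, htrace i, smul_eq_mul]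
  set c : Fin M → ℝ := fun i => p i / Z - (if i = i0 then ((dG : ℝ))⁻¹ else 0) with hc
  have hdiff : ((NormedSpace.exp ((-(β : ℂ)) • H)).trace)⁻¹ •
          NormedSpace.exp ((-(β : ℂ)) • H) -
        ((P i0).trace)⁻¹ • P i0 = ∑ i, ((c i : ℝ) : ℂ) • P i := by
    rw [hexptrace, hexp, hdG, Finset.smul_sum]
    have h2 : ((dG : ℂ))⁻¹ • P i0 = ∑ i, (if i = i0 then ((dG : ℂ))⁻¹ else 0) • P i := by
      simp [ite_smul]
    rw [h2, ← Finset.sum_sub_distrib]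
    refine Finset.sum_congr rfl fun i _ => ?_
    rw [smul_smul, ← sub_smul]
    congr 1
    have hZne : (Z : ℂ) ≠ 0 := by exact_mod_cast Complex.ofReal_ne_zero.mpr hZpos.ne'
    by_cases hii : i = i0
    · simp only [hc, hii, if_pos rfl]
      push_cast
      field_simp
    · simp only [hc, hii, if_neg hii]
      push_cast
      field_simp
  have hnorm : traceNorm (((NormedSpace.exp ((-(β : ℂ)) • H)).trace)⁻¹ •
          NormedSpace.exp ((-(β : ℂ)) • H) -
        ((P i0).trace)⁻¹ • P i0) = ∑ i, |c i| * t i := by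
    rw [hdiff, traceNorm_projSum P hPherm hPorth]
  -- evaluate the sum
  set S : ℝ := ∑ i ∈ Finset.univ.erase i0, p i * t i with hS
  have hZsplit : Z = p i0 * (dG : ℝ) + S := by
    rw [hZ, hS, ← Finset.add_sum_erase _ _ (Finset.mem_univ i0), hti0]
  have hSnn : 0 ≤ S := Finset.sum_nonneg fun i _ => hterm_nn i
  have hdGne : ((dG : ℝ)) ≠ 0 := by positivity
  have hZne : Z ≠ 0 := hZpos.ne'
  have habs : ∑ i, |c i| * t i = 2 * (S / Z) := by
    rw [← Finset.add_sum_erase _ _ (Finset.mem_univ i0)]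
    have hc0 : c i0 = p i0 / Z - ((dG : ℝ))⁻¹ := by simp [hc]
    have hle : p i0 / Z ≤ ((dG : ℝ))⁻¹ := by
      rw [inv_eq_one_div, div_le_div_iff₀ hZpos (by positivity)]
      linarith [hZ0]
    have h1 : |c i0| * t i0 = S / Z := by
      have habs0 : |c i0| = ((dG : ℝ))⁻¹ - p i0 / Z := by
        rw [hc0, abs_of_nonpos (by linarith), neg_sub]
      have hSval : S = Z - p i0 * (dG : ℝ) := by linarith [hZsplit]
      rw [habs0, hti0, hSval]
      field_simp
    have h2 : ∑ i ∈ Finset.univ.erase i0, |c i| * t i = S / Z := by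
      rw [hS, Finset.sum_div]
      refine Finset.sum_congr rfl fun i hi => ?_
      have hii : i ≠ i0 := Finset.ne_of_mem_erase hi
      have hci : c i = p i / Z := by simp [hc, hii]
      rw [hci, abs_of_nonneg (div_nonneg (hppos i).le hZpos.le)]
      ring
    rw [h1, h2]
    ring
  -- bound S
  have hti_rest : ∑ i ∈ Finset.univ.erase i0, t i = (d : ℝ) - (dG : ℝ) := by
    have h := Finset.add_sum_erase Finset.univ t (Finset.mem_univ i0)
    rw [htsum, hti0] at h
    linarith
  have hp1 : ∀ i, i ≠ i0 → p i ≤ p i1 := by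
    intro i hii
    have hval : i.val ≠ 0 := by
      rw [hi0] at hii
      exact fun h => hii (Fin.ext h)
    have h01 : lam i1 ≤ lam i := by
      apply hlam
      rw [hi1, Fin.le_def]
      simp only []
      omega
    apply Real.exp_le_exp.mpr
    nlinarith
  have hSle : S ≤ p i1 * ((d : ℝ) - (dG : ℝ)) := by
    rw [hS]
    calc ∑ i ∈ Finset.univ.erase i0, p i * t i
        ≤ ∑ i ∈ Finset.univ.erase i0, p i1 * t i :=
          Finset.sum_le_sum fun i hi =>
            mul_le_mul_of_nonneg_right (hp1 i (Finset.ne_of_mem_erase hi)) (htnn i)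
      _ = p i1 * ((d : ℝ) - (dG : ℝ)) := by rw [← Finset.mul_sum, hti_rest]
  have hE : Real.exp (β * (lam i1 - lam i0)) = p i0 / p i1 := by
    rw [hp]
    simp only []
    rw [← Real.exp_sub]
    congr 1
    ring
  rw [hnorm, habs, hE]
  have hDpos : (0 : ℝ) < (d : ℝ) - (dG : ℝ) := by
    have : (dG : ℝ) < (d : ℝ) := by exact_mod_cast hdGd
    linarith
  have h2S : 2 * (S / Z) / 2 = S / Z := by ring
  rw [h2S]
  have hp1pos := hppos i1
  have hp0pos := hppos i0
  have hden : 0 < 1 + p i0 / p i1 * ((dG : ℝ) / ((d : ℝ) - (dG : ℝ))) := by positivity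
  rw [div_le_div_iff₀ hZpos hden]
  have hq : 0 ≤ p i0 / p i1 * ((dG : ℝ) / ((d : ℝ) - (dG : ℝ))) := by positivity
  have key : S * (p i0 / p i1 * ((dG : ℝ) / ((d : ℝ) - (dG : ℝ)))) ≤ p i0 * (dG : ℝ) := by
    calc S * (p i0 / p i1 * ((dG : ℝ) / ((d : ℝ) - (dG : ℝ))))
        ≤ (p i1 * ((d : ℝ) - (dG : ℝ))) * (p i0 / p i1 * ((dG : ℝ) / ((d : ℝ) - (dG : ℝ)))) :=
          mul_le_mul_of_nonneg_right hSle hq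
      _ = p i0 * (dG : ℝ) := by field_simp
  have hexpand : S * (1 + p i0 / p i1 * ((dG : ℝ) / ((d : ℝ) - (dG : ℝ))))
      = S + S * (p i0 / p i1 * ((dG : ℝ) / ((d : ℝ) - (dG : ℝ)))) := by ring
  linarith [hZsplit]
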